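/- arXiv:1809.02470 — 4 statements merged into one kernel-verified Lean document; each statement's English description precedes it below -/
import Mathlib

section
/- For any two conditionally convergent series of real numbers ∑ a_n and ∑ b_n, there exists a single set A ⊆ ℕ such that the subseries of a over A tends to +∞ or -∞, and the subseries of b over A tends to +∞ or -∞. -/
open Filter

/-- The partial sums of the subseries of `a` over `A`: `S N = ∑_{n < N, n ∈ A} a n`. -/
noncomputable def partialSum (a : ℕ → ℝ) (A : Set ℕ) (N : ℕ) : ℝ :=
  ∑ n ∈ Finset.range N, Set.indicator A a n

/-- `A` sends the series `∑ a n` to infinity: the subseries over `A` tends to `+∞` or `-∞`. -/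
def SendsToInfinity (a : ℕ → ℝ) (A : Set ℕ) : Prop :=
  Tendsto (partialSum a A) atTop atTop ∨ Tendsto (partialSum a A) atTop atBot

/-- `∑ a n` is conditionally convergent: partial sums converge, but `∑ |a n| = ∞`. -/
def CondConv (a : ℕ → ℝ) : Prop :=
  (∃ L : ℝ, Tendsto (fun N => ∑ n ∈ Finset.range N, a n) atTop (nhds L)) ∧
    ¬ Summable (fun n => |a n|)

/-- The subseries of `a` over `A` is absolutely convergent: `∑_{n ∈ A} |a n| < ∞`. -/
def AbsConvOn (a : ℕ → ℝ) (A : Set ℕ) : Prop :=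
  Summable (Set.indicator A fun n => |a n|)

/-- `A` is tame w.r.t. `∑ a n` if at least one of the positive/nonpositive parts of the
subseries over `A` is absolutely convergent. -/
def Tame (a : ℕ → ℝ) (A : Set ℕ) : Prop :=
  AbsConvOn a {n ∈ A | 0 < a n} ∨ AbsConvOn a {n ∈ A | a n ≤ 0}

/-!
On a set where `a` has constant sign, the subseries of `a` goes to `±∞` as soon as it is not
absolutely convergent, and adding an absolutely convergent subseries does not change that. Both
the positive and the nonpositive part of a conditionally convergent series diverge, so `a`
diverges absolutely on `{0 < a} ∩ T` for some `T ∈ {{0 < b}, {b ≤ 0}}`, and `b` diverges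
absolutely on `T`. If `b` diverges absolutely on `{0 < a} ∩ T`, take `A = {0 < a} ∩ T`. Otherwise
`b` diverges absolutely on `{a ≤ 0} ∩ T`, and we take `A = {a ≤ 0} ∩ T` if `a` does too, and
`A = T` if not.
-/

variable {a : ℕ → ℝ} {X Y : Set ℕ}

def OneSignedOn (a : ℕ → ℝ) (X : Set ℕ) : Prop :=
  (∀ n ∈ X, 0 ≤ a n) ∨ ∀ n ∈ X, a n ≤ 0

lemma OneSignedOn.mono (h : OneSignedOn a X) (hYX : Y ⊆ X) : OneSignedOn a Y :=
  h.imp (fun h n hn => h n (hYX hn)) fun h n hn => h n (hYX hn)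

lemma oneSignedOn_pos (a : ℕ → ℝ) : OneSignedOn a {n | 0 < a n} :=
  Or.inl fun _ hn => le_of_lt hn

lemma oneSignedOn_compl_pos (a : ℕ → ℝ) : OneSignedOn a {n | 0 < a n}ᶜ :=
  Or.inr fun _ hn => not_lt.mp hn

lemma AbsConvOn.summable_indicator (h : AbsConvOn a X) : Summable (X.indicator a) := by
  rw [AbsConvOn, show (X.indicator fun n => |a n|) = (|·|) ∘ X.indicator a from
    Set.indicator_comp_of_zero abs_zero] at h
  exact summable_abs_iff.mp h

lemma AbsConvOn.union (hX : AbsConvOn a X) (hY : AbsConvOn a Y) : AbsConvOn a (X ∪ Y) := by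
  refine (hX.add hY).of_nonneg_of_le (Set.indicator_nonneg fun _ _ => abs_nonneg _) fun n => ?_
  have hsplit := congrFun (Set.indicator_union_add_inter (fun n => |a n|) X Y) n
  have hinter := Set.indicator_nonneg (s := X ∩ Y) (fun k _ => abs_nonneg (a k)) n
  simp only [Pi.add_apply] at hsplit ⊢
  linarith

lemma not_absConvOn_or_of_union (h : ¬AbsConvOn a (X ∪ Y)) :
    ¬AbsConvOn a X ∨ ¬AbsConvOn a Y := by
  contrapose! h
  exact h.1.union h.2

lemma partialSum_union (a : ℕ → ℝ) (hd : Disjoint X Y) (N : ℕ) :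
    partialSum a (X ∪ Y) N = partialSum a X N + partialSum a Y N := by
  simp only [partialSum, Set.indicator_union_of_disjoint hd, Finset.sum_add_distrib]

lemma partialSum_neg (a : ℕ → ℝ) (X : Set ℕ) : partialSum (-a) X = -partialSum a X := by
  ext N
  simp only [partialSum, Set.indicator_neg', Pi.neg_apply, Finset.sum_neg_distrib]

lemma partialSum_univ (a : ℕ → ℝ) :
    partialSum a Set.univ = fun N => ∑ n ∈ Finset.range N, a n := by
  ext N
  simp only [partialSum, Set.indicator_univ]

lemma sendsToInfinity_neg_iff : SendsToInfinity (-a) X ↔ SendsToInfinity a X := by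
  rw [SendsToInfinity, SendsToInfinity, partialSum_neg, or_comm]
  exact or_congr tendsto_neg_atBot_iff tendsto_neg_atTop_iff

lemma tendsto_partialSum_atTop (hpos : ∀ n ∈ X, 0 ≤ a n) (hX : ¬AbsConvOn a X) :
    Tendsto (partialSum a X) atTop atTop := by
  rw [AbsConvOn, Set.indicator_congr fun n hn => abs_of_nonneg (hpos n hn)] at hX
  exact (not_summable_iff_tendsto_nat_atTop_of_nonneg (Set.indicator_nonneg hpos)).mp hX

lemma OneSignedOn.sendsToInfinity (h : OneSignedOn a X) (hX : ¬AbsConvOn a X) :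
    SendsToInfinity a X := by
  rcases h with hpos | hneg
  · exact Or.inl (tendsto_partialSum_atTop hpos hX)
  · rw [← sendsToInfinity_neg_iff]
    refine Or.inl (tendsto_partialSum_atTop (fun n hn => neg_nonneg.mpr (hneg n hn)) ?_)
    simpa only [AbsConvOn, Pi.neg_apply, abs_neg] using hX

lemma SendsToInfinity.union (h : SendsToInfinity a X) (hY : AbsConvOn a Y) (hd : Disjoint X Y) :
    SendsToInfinity a (X ∪ Y) := by
  have hYlim := hY.summable_indicator.hasSum.tendsto_sum_nat
  rw [SendsToInfinity, funext (partialSum_union a hd)]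
  exact h.imp (fun h => h.atTop_add hYlim) fun h => h.atBot_add hYlim

lemma CondConv.not_sendsToInfinity_univ (ha : CondConv a) : ¬SendsToInfinity a Set.univ := by
  obtain ⟨⟨L, hL⟩, -⟩ := ha
  rw [SendsToInfinity, partialSum_univ]
  rintro (h | h)
  exacts [not_tendsto_atTop_of_tendsto_nhds hL h, not_tendsto_atBot_of_tendsto_nhds hL h]

-- Otherwise `ℕ = X ∪ Xᶜ` would send the convergent series to infinity.
lemma CondConv.not_absConvOn_compl (ha : CondConv a) (hX : OneSignedOn a X) :
    ¬AbsConvOn a Xᶜ := by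
  intro hXc
  have hX' : ¬AbsConvOn a X := by
    have : ¬AbsConvOn a (X ∪ Xᶜ) := by
      simpa only [AbsConvOn, Set.union_compl_self, Set.indicator_univ] using ha.2
    exact (not_absConvOn_or_of_union this).resolve_right (not_not.mpr hXc)
  have := (hX.sendsToInfinity hX').union hXc disjoint_compl_right
  rw [Set.union_compl_self] at this
  exact ha.not_sendsToInfinity_univ this

theorem exists_sendsToInfinity_both {a b : ℕ → ℝ} {T : Set ℕ} (hbT : OneSignedOn b T)
    (ha : ¬AbsConvOn a ({n | 0 < a n} ∩ T)) (hb : ¬AbsConvOn b T) :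
    ∃ A, SendsToInfinity a A ∧ SendsToInfinity b A := by
  set P := {n | 0 < a n}
  have haX : OneSignedOn a (P ∩ T) := (oneSignedOn_pos a).mono Set.inter_subset_left
  have haY : OneSignedOn a (Pᶜ ∩ T) := (oneSignedOn_compl_pos a).mono Set.inter_subset_left
  have hbX : OneSignedOn b (P ∩ T) := hbT.mono Set.inter_subset_right
  have hbY : OneSignedOn b (Pᶜ ∩ T) := hbT.mono Set.inter_subset_right
  have hd : Disjoint (P ∩ T) (Pᶜ ∩ T) :=
    disjoint_compl_right.mono Set.inter_subset_left Set.inter_subset_left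
  have hXY : P ∩ T ∪ Pᶜ ∩ T = T := by
    rw [Set.inter_comm P, Set.inter_comm Pᶜ, Set.inter_union_compl]
  by_cases hbX' : AbsConvOn b (P ∩ T)
  swap
  · exact ⟨P ∩ T, haX.sendsToInfinity ha, hbX.sendsToInfinity hbX'⟩
  have hbY' : ¬AbsConvOn b (Pᶜ ∩ T) :=
    (not_absConvOn_or_of_union (by rwa [hXY])).resolve_left (not_not.mpr hbX')
  by_cases haY' : AbsConvOn a (Pᶜ ∩ T)
  · refine ⟨P ∩ T ∪ Pᶜ ∩ T, (haX.sendsToInfinity ha).union haY' hd, ?_⟩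
    rw [Set.union_comm]
    exact (hbY.sendsToInfinity hbY').union hbX' hd.symm
  · exact ⟨Pᶜ ∩ T, haY.sendsToInfinity haY', hbY.sendsToInfinity hbY'⟩

/-- For any two conditionally convergent series, there is a single `A ⊆ ℕ`
sending both series to infinity. -/
theorem two_series (a b : ℕ → ℝ) (ha : CondConv a) (hb : CondConv b) :
    ∃ A : Set ℕ, SendsToInfinity a A ∧ SendsToInfinity b A := by
  set Q := {n | 0 < b n}
  have haP : ¬AbsConvOn a {n | 0 < a n} := by
    simpa only [compl_compl] using ha.not_absConvOn_compl (oneSignedOn_compl_pos a)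
  have hbQ : ¬AbsConvOn b Q := by
    simpa only [compl_compl] using hb.not_absConvOn_compl (oneSignedOn_compl_pos b)
  have hbQc : ¬AbsConvOn b Qᶜ := hb.not_absConvOn_compl (oneSignedOn_pos b)
  rw [← Set.inter_union_compl {n | 0 < a n} Q] at haP
  rcases not_absConvOn_or_of_union haP with haPQ | haPQc
  · exact exists_sendsToInfinity_both (oneSignedOn_pos b) haPQ hbQ
  · exact exists_sendsToInfinity_both (oneSignedOn_compl_pos b) haPQc hbQc
end

section
/- Let ∑ a_n be a conditionally convergent series of real numbers, and let A, B ⊆ ℕ be tame with respect to ∑ a_n. If the subseries of a over A tends to +∞, and the subseries of a over B either tends to +∞ or converges to a real number, then A ∪ B is tame with respect to ∑ a_n and the subseries of a over A ∪ B tends to +∞. -/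
/-! The subseries over a tame set tends to `-∞` unless its nonpositive part is absolutely
convergent: otherwise tameness makes the positive part converge while the nonpositive part
diverges to `-∞`. Neither `A` nor `B` tends to `-∞`, so the nonpositive parts over `A` and `B`,
hence over `A ∪ B`, are absolutely convergent, which makes `A ∪ B` tame. Moreover
`S_{A ∪ B} ≥ S_A + S_{B, a ≤ 0}` termwise, and the last subseries converges, so `S_{A ∪ B} → +∞`
along with `S_A`. -/

open Filter

section

variable {a : ℕ → ℝ} {S T A : Set ℕ}

lemma AbsConvOn.union_s6 (hS : AbsConvOn a S) (hT : AbsConvOn a T) : AbsConvOn a (S ∪ T) := by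
  refine (hS.add hT).of_nonneg_of_le (Set.indicator_nonneg fun _ _ => abs_nonneg _) fun n => ?_
  rw [← Pi.add_apply, ← Set.indicator_union_add_inter]
  exact le_add_of_nonneg_right (Set.indicator_nonneg (fun _ _ => abs_nonneg _) n)

lemma AbsConvOn.tendsto_partialSum (hS : AbsConvOn a S) :
    ∃ L, Tendsto (partialSum a S) atTop (nhds L) := by
  have hsum : Summable (S.indicator a) :=
    hS.of_norm_bounded fun n => (norm_indicator_eq_indicator_norm a n).le
  exact ⟨_, hsum.hasSum.tendsto_sum_nat⟩

lemma partialSum_eq_partialSum_pos_add_partialSum_nonpos (a : ℕ → ℝ) (A : Set ℕ) (N : ℕ) :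
    partialSum a A N =
      partialSum a {n ∈ A | 0 < a n} N + partialSum a {n ∈ A | a n ≤ 0} N := by
  simp only [partialSum, ← Finset.sum_add_distrib]
  refine Finset.sum_congr rfl fun n _ => ?_
  classical
  simp only [Set.indicator_apply, Set.mem_ofPred_eq]
  split_ifs <;> grind

lemma tendsto_partialSum_atBot_of_nonpos (hS : ∀ n ∈ S, a n ≤ 0) (h : ¬ AbsConvOn a S) :
    Tendsto (partialSum a S) atTop atBot := by
  have hneg : partialSum a S = fun N => -∑ n ∈ Finset.range N, S.indicator (|a ·|) n := by
    funext N
    rw [partialSum, ← Finset.sum_neg_distrib]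
    refine Finset.sum_congr rfl fun n _ => ?_
    by_cases hn : n ∈ S
    · simp [hn, abs_of_nonpos (hS n hn)]
    · simp [hn]
  rw [hneg]
  exact tendsto_neg_atTop_atBot.comp <| (not_summable_iff_tendsto_nat_atTop_of_nonneg
    (Set.indicator_nonneg fun _ _ => abs_nonneg _)).mp h

lemma Tame.absConvOn_nonpos (hA : Tame a A) (h : ¬ Tendsto (partialSum a A) atTop atBot) :
    AbsConvOn a {n ∈ A | a n ≤ 0} := by
  by_contra hnonpos
  obtain ⟨L, hpos⟩ := (hA.resolve_right hnonpos).tendsto_partialSum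
  refine h ?_
  simpa only [← partialSum_eq_partialSum_pos_add_partialSum_nonpos] using
    hpos.add_atBot (tendsto_partialSum_atBot_of_nonpos (fun _ hn => hn.2) hnonpos)

lemma partialSum_add_partialSum_nonpos_le (a : ℕ → ℝ) (A B : Set ℕ) (N : ℕ) :
    partialSum a A N + partialSum a {n ∈ B | a n ≤ 0} N ≤ partialSum a (A ∪ B) N := by
  simp only [partialSum, ← Finset.sum_add_distrib]
  refine Finset.sum_le_sum fun n _ => ?_
  classical
  simp only [Set.indicator_apply, Set.mem_ofPred_eq, Set.mem_union]
  split_ifs <;> grind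

end

theorem tame_union_top_general (a : ℕ → ℝ) (A B : Set ℕ)
    (hA : Tame a A) (hB : Tame a B)
    (hAtop : Tendsto (partialSum a A) atTop atTop)
    (hBok : Tendsto (partialSum a B) atTop atTop ∨
      ∃ t : ℝ, Tendsto (partialSum a B) atTop (nhds t)) :
    Tame a (A ∪ B) ∧ Tendsto (partialSum a (A ∪ B)) atTop atTop := by
  have hA' := hA.absConvOn_nonpos (hAtop.not_tendsto disjoint_atTop_atBot)
  have hB' := hB.absConvOn_nonpos <| by
    rcases hBok with hBtop | ⟨t, hBt⟩
    exacts [hBtop.not_tendsto disjoint_atTop_atBot, not_tendsto_atBot_of_tendsto_nhds hBt]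
  obtain ⟨L, hL⟩ := hB'.tendsto_partialSum
  refine ⟨Or.inr ?_, tendsto_atTop_mono (partialSum_add_partialSum_nonpos_le a A B) ?_⟩
  · have hAB := hA'.union_s6 hB'
    rwa [← Set.sep_union] at hAB
  · exact hAtop.atTop_add hL

/-- Lemma 4 (union of tame sets, `+∞` case): if `A` and `B` are tame, the subseries over `A`
tends to `+∞`, and the subseries over `B` tends to `+∞` or converges, then `A ∪ B` is tame and
the subseries over `A ∪ B` tends to `+∞`. -/
theorem tame_union_top (a : ℕ → ℝ) (hcc : CondConv a) (A B : Set ℕ)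
    (hA : Tame a A) (hB : Tame a B)
    (hAtop : Tendsto (partialSum a A) atTop atTop)
    (hBok : Tendsto (partialSum a B) atTop atTop ∨
      ∃ t : ℝ, Tendsto (partialSum a B) atTop (nhds t)) :
    Tame a (A ∪ B) ∧ Tendsto (partialSum a (A ∪ B)) atTop atTop :=
  tame_union_top_general a A B hA hB hAtop hBok
end

section
/- Let F be a full, union-closed subset of Fn(3,2) containing no function whose domain is all of {1,2,3}. Then F contains two functions f and g such that |dom(f)| = |dom(g)| = 2, |dom(f) ∩ dom(g)| = 1, and f and g take different values at the unique element of dom(f) ∩ dom(g). -/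
open Filter

/-- A partial function from `{1,2,3}` to the two-element set `{p, n}` (here `p = true`,
`n = false`), encoded as `Fin 3 → Option Bool`. `Fn32` is the set of such partial functions
with nonempty domain. -/
def Fn32 : Set (Fin 3 → Option Bool) :=
  {f | ∃ x, f x ≠ none}

/-- The domain of a partial function. -/
def pdom (f : Fin 3 → Option Bool) : Finset (Fin 3) :=
  Finset.univ.filter (fun x => f x ≠ none)

/-- `F` is full: every value is attained at every point by some member of `F`. -/
def Full (F : Set (Fin 3 → Option Bool)) : Prop :=
  ∀ x : Fin 3, ∀ y : Bool, ∃ f ∈ F, f x = some y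

/-- Two partial functions are compatible if they agree on the intersection of their domains. -/
def Compatible (f g : Fin 3 → Option Bool) : Prop :=
  ∀ x, f x = none ∨ g x = none ∨ f x = g x

/-- The union of two (compatible) partial functions. -/
def pUnion (f g : Fin 3 → Option Bool) : Fin 3 → Option Bool :=
  fun x => (f x).orElse (fun _ => g x)

/-- `F` is union-closed: the union of any two compatible members of `F` is in `F`. -/
def UnionClosed (F : Set (Fin 3 → Option Bool)) : Prop :=
  ∀ f ∈ F, ∀ g ∈ F, Compatible f g → pUnion f g ∈ F

/-!
Fullness and union-closedness produce a member `f` with two-element domain `{m}ᶜ`: two members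
defined at different points either already have two-element domains or are singletons with
disjoint domains, whose union has one. A member `g` defined at `m` cannot be compatible with `f`,
since `f ∪ g` would be total; so they disagree at some `x ≠ m`, and `g`, not being total, has
domain exactly `{m, x}`.
-/

lemma Finset.exists_eq_compl_singleton {α : Type*} [Fintype α] [DecidableEq α] {s : Finset α}
    (hs : s.card + 1 = Fintype.card α) : ∃ m, s = {m}ᶜ := by
  obtain ⟨m, hm⟩ := Finset.card_eq_one.1 (by rw [Finset.card_compl]; omega : (sᶜ).card = 1)
  exact ⟨m, by rw [← hm, compl_compl]⟩

lemma mem_pdom {f : Fin 3 → Option Bool} {x : Fin 3} : x ∈ pdom f ↔ f x ≠ none := by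
  simp [pdom]

lemma pdom_ne_univ_iff {f : Fin 3 → Option Bool} : pdom f ≠ Finset.univ ↔ ∃ x, f x = none := by
  simp [Finset.eq_univ_iff_forall, mem_pdom]

lemma card_pdom_le_two {f : Fin 3 → Option Bool} (h : ∃ x, f x = none) : (pdom f).card ≤ 2 :=
  Nat.le_of_lt_succ <| (Finset.card_lt_iff_ne_univ _).2 (pdom_ne_univ_iff.2 h)

lemma pdom_eq_singleton {f : Fin 3 → Option Bool} {x : Fin 3} (hx : f x ≠ none)
    (hnone : ∃ y, f y = none) (hcard : (pdom f).card ≠ 2) : pdom f = {x} :=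
  (Finset.eq_of_subset_of_card_le (Finset.singleton_subset_iff.2 (mem_pdom.2 hx))
    (by have := card_pdom_le_two hnone; simp; omega)).symm

lemma pdom_pUnion (f g : Fin 3 → Option Bool) : pdom (pUnion f g) = pdom f ∪ pdom g := by
  ext x
  simp only [mem_pdom, Finset.mem_union, pUnion]
  cases f x <;> simp [Option.orElse]

lemma compatible_of_disjoint {f g : Fin 3 → Option Bool} (h : Disjoint (pdom f) (pdom g)) :
    Compatible f g := fun x => by
  by_contra! hx
  exact Finset.disjoint_left.1 h (mem_pdom.2 hx.1) (mem_pdom.2 hx.2.1)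

lemma not_compatible_iff {f g : Fin 3 → Option Bool} :
    ¬ Compatible f g ↔ ∃ x ∈ pdom f ∩ pdom g, f x ≠ g x := by
  simp only [Compatible, not_forall, not_or, Finset.mem_inter, mem_pdom, and_assoc]

lemma Full.exists_card_pdom_eq_two {F : Set (Fin 3 → Option Bool)} (hfull : Full F)
    (huc : UnionClosed F) (hnofull : ∀ f ∈ F, ∃ x, f x = none) :
    ∃ f ∈ F, (pdom f).card = 2 := by
  obtain ⟨f, hf, hf0⟩ := hfull 0 true
  obtain ⟨g, hg, hg1⟩ := hfull 1 true
  by_cases hf2 : (pdom f).card = 2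
  · exact ⟨f, hf, hf2⟩
  by_cases hg2 : (pdom g).card = 2
  · exact ⟨g, hg, hg2⟩
  have hf_eq := pdom_eq_singleton (x := 0) (by simp [hf0]) (hnofull f hf) hf2
  have hg_eq := pdom_eq_singleton (x := 1) (by simp [hg1]) (hnofull g hg) hg2
  refine ⟨pUnion f g, huc f hf g hg (compatible_of_disjoint ?_), ?_⟩
  · simp [hf_eq, hg_eq]
  · rw [pdom_pUnion, hf_eq, hg_eq]
    rfl

theorem exists_incompatible_pair_general (F : Set (Fin 3 → Option Bool))
    (hfull : Full F) (huc : UnionClosed F)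
    (hnofull : ∀ f ∈ F, ∃ x, f x = none) :
    ∃ f ∈ F, ∃ g ∈ F, (pdom f).card = 2 ∧ (pdom g).card = 2 ∧
      (pdom f ∩ pdom g).card = 1 ∧
      ∀ x ∈ pdom f ∩ pdom g, f x ≠ g x := by
  obtain ⟨f, hfF, hf2⟩ := hfull.exists_card_pdom_eq_two huc hnofull
  obtain ⟨m, hf⟩ := Finset.exists_eq_compl_singleton (s := pdom f) (by simp [hf2])
  obtain ⟨g, hgF, hgm⟩ := hfull m true
  have hm : m ∈ pdom g := mem_pdom.2 (by simp [hgm])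
  have hnc : ¬ Compatible f g := fun hc => pdom_ne_univ_iff.2 (hnofull _ (huc f hfF g hgF hc)) <| by
    rw [pdom_pUnion, hf, Finset.eq_univ_iff_forall]
    intro x
    rcases eq_or_ne x m with rfl | hx <;> simp [*]
  obtain ⟨x, hx, hfgx⟩ := not_compatible_iff.1 hnc
  rw [Finset.mem_inter, hf, Finset.mem_compl, Finset.mem_singleton] at hx
  have hg : pdom g = {m, x} := (Finset.eq_of_subset_of_card_le
    (Finset.insert_subset hm (Finset.singleton_subset_iff.2 hx.2))
    (by rw [Finset.card_pair (Ne.symm hx.1)]; exact card_pdom_le_two (hnofull g hgF))).symm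
  have hfg : pdom f ∩ pdom g = {x} := by
    ext y
    simp only [hf, hg, Finset.mem_inter, Finset.mem_compl, Finset.mem_singleton, Finset.mem_insert]
    grind
  refine ⟨f, hfF, g, hgF, hf2, by rw [hg, Finset.card_pair (Ne.symm hx.1)], by rw [hfg]; rfl, ?_⟩
  rw [hfg]
  simpa using hfgx

/-- If `F ⊆ Fn(3,2)` is full and union-closed and contains no function with full domain,
then `F` contains two functions with two-element domains meeting in a single point, at which
they take different values. -/
theorem exists_incompatible_pair (F : Set (Fin 3 → Option Bool)) (hF : F ⊆ Fn32)
    (hfull : Full F) (huc : UnionClosed F)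
    (hnofull : ∀ f ∈ F, ∃ x, f x = none) :
    ∃ f ∈ F, ∃ g ∈ F, (pdom f).card = 2 ∧ (pdom g).card = 2 ∧
      (pdom f ∩ pdom g).card = 1 ∧
      ∀ x ∈ pdom f ∩ pdom g, f x ≠ g x :=
  exists_incompatible_pair_general F hfull huc hnofull
end

section
/- Let ∑ a_n be a conditionally convergent series of real numbers and let A ⊆ ℕ be tame with respect to ∑ a_n with the subseries of a over A tending to +∞. If C ⊆ A and the subseries of a over C does not converge to any real number, then ∑_{n ∈ C, a_n ≤ 0} |a_n| < ∞ and the partial sums ∑_{n < N, n ∈ C, a_n > 0} a_n tend to +∞. -/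
/-!
If the positive part of the subseries over `A` were absolutely convergent, the partial sums over
`A` would be bounded above by its sum, contradicting `S_N → +∞`; so tameness forces the
nonpositive part over `A`, hence over `C ⊆ A`, to be absolutely convergent. The partial sums over
`C` then differ from the monotone partial sums of its positive part by a convergent sequence, and
a monotone sequence that does not converge tends to `+∞`.
-/

open Filter Topology

section partialSum

variable {a : ℕ → ℝ} {B : Set ℕ}

lemma partialSum_pos_add_partialSum_nonpos (a : ℕ → ℝ) (A : Set ℕ) (N : ℕ) :
    partialSum a {n ∈ A | 0 < a n} N + partialSum a {n ∈ A | a n ≤ 0} N =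
      partialSum a A N := by
  rw [partialSum, partialSum, partialSum, ← Finset.sum_add_distrib]
  refine Finset.sum_congr rfl fun n _ => ?_
  by_cases hn : n ∈ A <;> by_cases ha : 0 < a n <;> simp [hn, ha, not_lt.mp]

lemma partialSum_nonpos (h : ∀ n ∈ B, a n ≤ 0) (N : ℕ) : partialSum a B N ≤ 0 :=
  Finset.sum_nonpos fun n _ => Set.indicator_apply_nonpos (h n)

lemma monotone_partialSum (h : ∀ n ∈ B, 0 ≤ a n) : Monotone (partialSum a B) :=
  monotone_nat_of_le_succ fun N => by
    rw [partialSum, partialSum, Finset.sum_range_succ]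
    exact le_add_of_nonneg_right (Set.indicator_apply_nonneg (h N))

end partialSum

namespace AbsConvOn

variable {a : ℕ → ℝ} {A B : Set ℕ}

lemma mono (hAB : A ⊆ B) (hB : AbsConvOn a B) : AbsConvOn a A := by
  have := hB.indicator A
  rwa [Set.indicator_indicator, Set.inter_eq_left.mpr hAB] at this

lemma tendsto_partialSum_s14 (h : AbsConvOn a A) :
    Tendsto (partialSum a A) atTop (𝓝 (∑' n, A.indicator a n)) := by
  have hs : Summable (A.indicator a) := by
    refine Summable.of_abs ?_
    rwa [← Function.comp_def abs, ← Set.indicator_comp_of_zero abs_zero]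
  exact hs.hasSum.tendsto_sum_nat

end AbsConvOn

lemma Tame.absConvOn_nonpos_of_tendsto_atTop {a : ℕ → ℝ} {A : Set ℕ} (hA : Tame a A)
    (htop : Tendsto (partialSum a A) atTop atTop) : AbsConvOn a {n ∈ A | a n ≤ 0} := by
  refine hA.resolve_left fun hpos => not_tendsto_atTop_of_tendsto_nhds hpos.tendsto_partialSum_s14 ?_
  refine tendsto_atTop_mono (fun N => ?_) htop
  rw [← partialSum_pos_add_partialSum_nonpos a A N]
  exact add_le_of_nonpos_right (partialSum_nonpos (fun n hn => hn.2) N)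

theorem balance_two_claim_one_general (a : ℕ → ℝ) (A : Set ℕ)
    (hA : Tame a A) (htop : Tendsto (partialSum a A) atTop atTop)
    (C : Set ℕ) (hCA : C ⊆ A)
    (hC : ¬ ∃ L : ℝ, Tendsto (partialSum a C) atTop (nhds L)) :
    AbsConvOn a {n ∈ C | a n ≤ 0} ∧
      Tendsto (partialSum a {n ∈ C | 0 < a n}) atTop atTop := by
  have hnegC : AbsConvOn a {n ∈ C | a n ≤ 0} :=
    (hA.absConvOn_nonpos_of_tendsto_atTop htop).mono fun _ hn => And.intro (hCA hn.1) hn.2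
  refine ⟨hnegC, ?_⟩
  have hmono : Monotone (partialSum a {n ∈ C | 0 < a n}) :=
    monotone_partialSum fun n hn => hn.2.le
  refine (tendsto_atTop_of_monotone hmono).resolve_right ?_
  rintro ⟨l, hl⟩
  have hCconv := hl.add hnegC.tendsto_partialSum_s14
  simp only [partialSum_pos_add_partialSum_nonpos] at hCconv
  exact hC ⟨_, hCconv⟩

/-- Claim 1 in Lemma 9: if `A` is tame with subseries tending to `+∞`, `C ⊆ A`, and the
subseries over `C` does not converge, then the nonpositive part of the subseries over `C`
is absolutely convergent and the positive part tends to `+∞`. -/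
theorem balance_two_claim_one (a : ℕ → ℝ) (hcc : CondConv a) (A : Set ℕ)
    (hA : Tame a A) (htop : Tendsto (partialSum a A) atTop atTop)
    (C : Set ℕ) (hCA : C ⊆ A)
    (hC : ¬ ∃ L : ℝ, Tendsto (partialSum a C) atTop (nhds L)) :
    AbsConvOn a {n ∈ C | a n ≤ 0} ∧
      Tendsto (partialSum a {n ∈ C | 0 < a n}) atTop atTop :=
  balance_two_claim_one_general a A hA htop C hCA hC
end
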